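/- arXiv:2001.10699 — 4 statements merged into one kernel-verified Lean document; each statement's English description precedes it below -/
import Mathlib

section
/- Let n ≥ 1 and let w : Fin 4 → Fin n → ℤ be such that w(p,i) ≠ 0 for all p and i. For each p, write σ(p) = Σ_{i} w(p,i) and Π(p) = Π_{i} w(p,i). Assume that (i) for every integer k, Σ_{p : σ(p) = k} 1/Π(p) = 0 as a rational number, and (ii) Σ_p σ(p) = 0. Then one of the following holds: (1) σ(p) = 0 for all p, and Σ_p 1/Π(p) = 0; or (2) the four indices can be divided into two pairs (p1,p2) and (p3,p4) such that Π(p1) = −Π(p2), Π(p3) = −Π(p4), and σ(p1) = σ(p2) = −σ(p3) = −σ(p4). -/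
/-! Every fibre of `σ` carries a vanishing sum of the nonzero numbers `1/Π(p)`, so no fibre is a
singleton. Four points then split into two pairs `{p₁, p₂}`, `{p₃, p₄}` on each of which `σ` is
constant, and `Σ σ = 0` forces `σ(p₃) = -σ(p₁)`. If `σ(p₁) = 0` then `σ` vanishes identically;
otherwise the two pairs are exactly the two fibres, and a vanishing sum `1/x + 1/y = 0` means
`x = -y`. -/

open Finset

section Fibers

variable {ι β M : Type*} [Fintype ι] [DecidableEq ι] [AddCommMonoid M]

theorem exists_ne_apply_eq_of_sum_fiber_eq_zero [DecidableEq β] {S : ι → β} {f : ι → M}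
    (hf : ∀ p, f p ≠ 0)
    (hS : ∀ b, ∑ p ∈ univ.filter (fun p => S p = b), f p = 0) (p : ι) :
    ∃ q ≠ p, S q = S p := by
  by_contra! h
  have hfiber : univ.filter (fun q => S q = S p) = {p} := by
    ext q
    simp only [mem_filter, mem_univ, true_and, mem_singleton]
    exact ⟨fun hq => by_contra fun hqp => h q hqp hq, fun hq => hq ▸ rfl⟩
  exact hf p (by simpa [hfiber] using hS (S p))

theorem eq_or_eq_or_eq_or_eq_of_compl_pair_eq_pair {a b c d : ι}
    (hcompl : ({a, b}ᶜ : Finset ι) = {c, d}) (t : ι) : t = a ∨ t = b ∨ t = c ∨ t = d := by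
  by_cases ht : t ∈ ({a, b} : Finset ι)
  · simp only [mem_insert, mem_singleton] at ht
    tauto
  · rw [← mem_compl, hcompl] at ht
    simp only [mem_insert, mem_singleton] at ht
    tauto

theorem exists_pair_compl_eq_pair_of_card_eq_four (hι : Fintype.card ι = 4) {S : ι → β}
    (hS : ∀ p, ∃ q ≠ p, S q = S p) :
    ∃ p₁ p₂ p₃ p₄ : ι, ({p₁, p₂}ᶜ : Finset ι) = {p₃, p₄} ∧ p₁ ≠ p₂ ∧ p₃ ≠ p₄ ∧
      S p₁ = S p₂ ∧ S p₃ = S p₄ := by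
  obtain ⟨p₁⟩ : Nonempty ι := Fintype.card_pos_iff.mp (by omega)
  obtain ⟨p₂, hp₂₁, hS₂₁⟩ := hS p₁
  obtain ⟨p₃, p₄, hp₃₄, hcompl⟩ : ∃ p₃ p₄, p₃ ≠ p₄ ∧ ({p₁, p₂}ᶜ : Finset ι) = {p₃, p₄} := by
    apply card_eq_two.mp
    rw [card_compl, card_pair hp₂₁.symm, hι]
  have hcover := eq_or_eq_or_eq_or_eq_of_compl_pair_eq_pair hcompl
  refine ⟨p₁, p₂, p₃, p₄, hcompl, hp₂₁.symm, hp₃₄, hS₂₁.symm, ?_⟩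
  obtain ⟨q₃, hq₃, hSq₃⟩ := hS p₃
  obtain ⟨q₄, hq₄, hSq₄⟩ := hS p₄
  -- if `p₃`'s partner is not `p₄` it lies in `{p₁, p₂}`, so `S` is constant on `{p₁, p₂, p₃}`,
  -- which contains `p₄`'s partner
  have hq₃cover := hcover q₃
  have hq₄cover := hcover q₄
  grind

theorem filter_apply_eq_of_compl_eq_pair [DecidableEq β] {S : ι → β} {a b c d : ι}
    (hcompl : ({a, b}ᶜ : Finset ι) = {c, d}) (hab : S a = S b) (hcd : S c = S d)
    (hac : S a ≠ S c) :
    univ.filter (fun p => S p = S a) = {a, b} := by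
  ext t
  rcases eq_or_eq_or_eq_or_eq_of_compl_pair_eq_pair hcompl t with rfl | rfl | rfl | rfl <;>
    grind

theorem eq_zero_or_exists_pairs_of_sum_fiber_eq_zero (hι : Fintype.card ι = 4) {S : ι → ℤ}
    {f : ι → M} (hf : ∀ p, f p ≠ 0)
    (hS : ∀ k, ∑ p ∈ univ.filter (fun p => S p = k), f p = 0) (hsum : ∑ p, S p = 0) :
    ((∀ p, S p = 0) ∧ ∑ p, f p = 0) ∨
    ∃ p₁ p₂ p₃ p₄ : ι, ({p₁, p₂, p₃, p₄} : Finset ι) = univ ∧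
      f p₁ + f p₂ = 0 ∧ f p₃ + f p₄ = 0 ∧
      S p₁ = S p₂ ∧ S p₁ = -S p₃ ∧ S p₃ = S p₄ := by
  obtain ⟨p₁, p₂, p₃, p₄, hcompl, hp₁₂, hp₃₄, hS₁₂, hS₃₄⟩ :=
    exists_pair_compl_eq_pair_of_card_eq_four hι (exists_ne_apply_eq_of_sum_fiber_eq_zero hf hS)
  have hS₃ : S p₃ = -S p₁ := by
    rw [← sum_add_sum_compl {p₁, p₂}, hcompl, sum_pair hp₁₂, sum_pair hp₃₄] at hsum
    omega
  have hcompl' : ({p₃, p₄}ᶜ : Finset ι) = {p₁, p₂} := compl_eq_comm.mp hcompl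
  by_cases hS₁ : S p₁ = 0
  · have hzero : ∀ p, S p = 0 := fun p => by
      rcases eq_or_eq_or_eq_or_eq_of_compl_pair_eq_pair hcompl p with rfl | rfl | rfl | rfl <;>
        omega
    refine .inl ⟨hzero, ?_⟩
    simpa [hzero] using hS 0
  · have hfiber₁ := filter_apply_eq_of_compl_eq_pair hcompl hS₁₂ hS₃₄ (by omega)
    have hfiber₃ := filter_apply_eq_of_compl_eq_pair hcompl' hS₃₄ hS₁₂ (by omega)
    refine .inr ⟨p₁, p₂, p₃, p₄, ?_, ?_, ?_, hS₁₂, by omega, hS₃₄⟩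
    · rw [← union_compl {p₁, p₂}, hcompl, insert_union, singleton_union]
    · simpa [hfiber₁, sum_pair hp₁₂] using hS (S p₁)
    · simpa [hfiber₃, sum_pair hp₃₄] using hS (S p₃)

end Fibers

theorem eq_neg_of_inv_add_inv_eq_zero {K : Type*} [DivisionRing K] {x y : K}
    (h : x⁻¹ + y⁻¹ = 0) : x = -y := by
  rwa [add_eq_zero_iff_eq_neg, ← inv_neg, inv_inj] at h

theorem stmt_1_general (n : ℕ) (w : Fin 4 → Fin n → ℤ)
    (hw : ∀ p i, w p i ≠ 0)
    (h1 : ∀ k : ℤ,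
      ∑ p ∈ univ.filter (fun p => ∑ i, w p i = k), (1 : ℚ) / (∏ i, w p i : ℤ) = 0)
    (h2 : ∑ p, ∑ i, w p i = 0) :
    ((∀ p, ∑ i, w p i = 0) ∧ ∑ p, (1 : ℚ) / (∏ i, w p i : ℤ) = 0) ∨
    (∃ p1 p2 p3 p4 : Fin 4, ({p1, p2, p3, p4} : Finset (Fin 4)) = univ ∧
      (∏ i, w p1 i) = -(∏ i, w p2 i) ∧
      (∏ i, w p3 i) = -(∏ i, w p4 i) ∧
      (∑ i, w p1 i) = (∑ i, w p2 i) ∧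
      (∑ i, w p1 i) = -(∑ i, w p3 i) ∧
      (∑ i, w p3 i) = (∑ i, w p4 i)) := by
  have hinv : ∀ p, (1 : ℚ) / (∏ i, w p i : ℤ) ≠ 0 := fun p => by
    simpa [prod_eq_zero_iff] using hw p
  have hprod : ∀ p q, (1 : ℚ) / (∏ i, w p i : ℤ) + 1 / (∏ i, w q i : ℤ) = 0 →
      ∏ i, w p i = -∏ i, w q i := fun p q h => by
    rw [one_div, one_div] at h
    exact_mod_cast eq_neg_of_inv_add_inv_eq_zero h
  refine (eq_zero_or_exists_pairs_of_sum_fiber_eq_zero (Fintype.card_fin 4) hinv h1 h2).imp_right ?_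
  rintro ⟨p₁, p₂, p₃, p₄, huniv, hf₁₂, hf₃₄, hσ⟩
  exact ⟨p₁, p₂, p₃, p₄, huniv, hprod p₁ p₂ hf₁₂, hprod p₃ p₄ hf₃₄, hσ⟩

theorem stmt_1 (n : ℕ) (hn : 1 ≤ n) (w : Fin 4 → Fin n → ℤ)
    (hw : ∀ p i, w p i ≠ 0)
    (h1 : ∀ k : ℤ,
      ∑ p ∈ univ.filter (fun p => ∑ i, w p i = k), (1 : ℚ) / (∏ i, w p i : ℤ) = 0)
    (h2 : ∑ p, ∑ i, w p i = 0) :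
    ((∀ p, ∑ i, w p i = 0) ∧ ∑ p, (1 : ℚ) / (∏ i, w p i : ℤ) = 0) ∨
    (∃ p1 p2 p3 p4 : Fin 4, ({p1, p2, p3, p4} : Finset (Fin 4)) = univ ∧
      (∏ i, w p1 i) = -(∏ i, w p2 i) ∧
      (∏ i, w p3 i) = -(∏ i, w p4 i) ∧
      (∑ i, w p1 i) = (∑ i, w p2 i) ∧
      (∑ i, w p1 i) = -(∑ i, w p3 i) ∧
      (∑ i, w p3 i) = (∑ i, w p4 i)) :=
  stmt_1_general n w hw h1 h2
end

section
/- There do not exist positive integers a1, a2, a3, a4, b2, b3, b4, c1 satisfying all of the following: a1 + a2 + a3 + a4 = −a1 + b2 + b3 + b4; a1 + a2 + a3 + a4 = a2 + a3 + b2 − c1; a1 + a2 + a3 + a4 = a4 + b3 + b4 + c1; a2·a3·a4 = b2·b3·b4; and a2·a3·b2 = a4·b3·b4. -/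
/-!
The second sum equation gives `b2 = a1 + a4 + c1 > a4`. Writing `p = a2 a3` and `q = b3 b4`, the
product equations read `p a4 = b2 q` and `p b2 = a4 q`; subtracting them gives
`(p + q)(a4 - b2) = 0`, so `a4 = b2` because `p + q > 0`.
-/

theorem eq_of_mul_eq_mul_of_mul_eq_mul_swap {R : Type*} [CommRing R] [NoZeroDivisors R]
    {p q x y : R} (hpq : p + q ≠ 0) (hx : p * x = y * q) (hy : p * y = x * q) : x = y := by
  have h : (p + q) * (x - y) = 0 := by linear_combination hx - hy
  exact sub_eq_zero.mp ((mul_eq_zero.mp h).resolve_left hpq)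

theorem stmt_4 :
    ¬ ∃ a1 a2 a3 a4 b2 b3 b4 c1 : ℤ,
      0 < a1 ∧ 0 < a2 ∧ 0 < a3 ∧ 0 < a4 ∧ 0 < b2 ∧ 0 < b3 ∧ 0 < b4 ∧ 0 < c1 ∧
      a1 + a2 + a3 + a4 = -a1 + b2 + b3 + b4 ∧
      a1 + a2 + a3 + a4 = a2 + a3 + b2 - c1 ∧
      a1 + a2 + a3 + a4 = a4 + b3 + b4 + c1 ∧
      a2 * a3 * a4 = b2 * b3 * b4 ∧
      a2 * a3 * b2 = a4 * b3 * b4 := by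
  rintro ⟨a1, a2, a3, a4, b2, b3, b4, c1, ha1, ha2, ha3, -, -, hb3, hb4, hc1,
    -, hsum, -, hprod, hprod'⟩
  have hb2 : b2 = a1 + a4 + c1 := by linarith
  have ha4 : a4 = b2 := by
    refine eq_of_mul_eq_mul_of_mul_eq_mul_swap (p := a2 * a3) (q := b3 * b4) ?_ ?_ ?_
    · positivity
    · rw [hprod]; ring
    · rw [hprod']; ring
  linarith
end

section
/- There do not exist positive integers a1, a2, a3, a4, b2, b3, b4, c1 satisfying all of the following: a1 + a2 + a3 + a4 = −a1 + b2 + b3 + b4; a1 + a2 + a3 + a4 = a2 + b2 + b3 − c1; a1 + a2 + a3 + a4 = a3 + a4 + b4 + c1; a2·a3·a4 = b2·b3·b4; a2·b2·b3 = a3·a4·b4; and, in the rational numbers, σ2(a1,a2,a3,a4)/(a1·a2·a3·a4) + σ2(−a1,b2,b3,b4)/(−a1·b2·b3·b4) + σ2(c1,−a2,−b2,−b3)/(−a2·b2·b3·c1) + σ2(−c1,−a3,−a4,−b4)/(a3·a4·b4·c1) = 0, where σ2 denotes the second elementary symmetric polynomial in four variables. -/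
/-- The second elementary symmetric polynomial in four variables. -/
def sigma2 (w x y z : ℚ) : ℚ := w * x + w * y + w * z + x * y + x * z + y * z

theorem eq_and_eq_of_mul_eq_mul_of_mul_eq_mul {R : Type*} [CommRing R] [IsDomain R]
    {x y p q : R} (hx : x ≠ 0) (hpq : p + q ≠ 0) (h₁ : x * p = y * q) (h₂ : x * q = y * p) :
    x = y ∧ p = q := by
  have hxy : x = y := by
    have : (x - y) * (p + q) = 0 := by linear_combination h₁ + h₂
    exact sub_eq_zero.mp ((mul_eq_zero.mp this).resolve_right hpq)
  refine ⟨hxy, mul_left_cancel₀ hx ?_⟩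
  linear_combination h₁ - q * hxy

/- Under these relations the second and third numerators coincide, as do the first and fourth
terms. -/
theorem localization_sum_eq {a1 a2 a3 a4 b2 b3 : ℚ} (ha1 : a1 ≠ 0) (ha2 : a2 ≠ 0)
    (ha3 : a3 ≠ 0) (ha4 : a4 ≠ 0) (hP : b2 * b3 = a3 * a4) (hS : b2 + b3 = 2 * a1 + a3 + a4) :
    sigma2 a1 a2 a3 a4 / (a1 * a2 * a3 * a4)
        + sigma2 (-a1) b2 b3 a2 / (-a1 * b2 * b3 * a2)
        + sigma2 a1 (-a2) (-b2) (-b3) / (-a2 * b2 * b3 * a1)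
        + sigma2 (-a1) (-a3) (-a4) (-a2) / (a3 * a4 * a2 * a1)
      = 4 * (a1 + a3 + a4) / (a2 * a3 * a4) := by
  have hb : b2 * b3 ≠ 0 := hP ▸ mul_ne_zero ha3 ha4
  have hb2 : b2 ≠ 0 := left_ne_zero_of_mul hb
  have hb3 : b3 ≠ 0 := right_ne_zero_of_mul hb
  unfold sigma2
  field_simp
  linear_combination (2 * a2 * (a1 + a3 + a4) - 2 * a1 * (2 * a1 + a3 + a4)) * hP
    + 2 * (a1 - a2) * a3 * a4 * hS

theorem stmt_5 :
    ¬ ∃ a1 a2 a3 a4 b2 b3 b4 c1 : ℤ,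
      0 < a1 ∧ 0 < a2 ∧ 0 < a3 ∧ 0 < a4 ∧ 0 < b2 ∧ 0 < b3 ∧ 0 < b4 ∧ 0 < c1 ∧
      a1 + a2 + a3 + a4 = -a1 + b2 + b3 + b4 ∧
      a1 + a2 + a3 + a4 = a2 + b2 + b3 - c1 ∧
      a1 + a2 + a3 + a4 = a3 + a4 + b4 + c1 ∧
      a2 * a3 * a4 = b2 * b3 * b4 ∧
      a2 * b2 * b3 = a3 * a4 * b4 ∧
      sigma2 (a1 : ℚ) a2 a3 a4 / ((a1 : ℚ) * a2 * a3 * a4)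
        + sigma2 (-(a1 : ℚ)) b2 b3 b4 / (-(a1 : ℚ) * b2 * b3 * b4)
        + sigma2 (c1 : ℚ) (-(a2 : ℚ)) (-(b2 : ℚ)) (-(b3 : ℚ))
            / (-(a2 : ℚ) * b2 * b3 * c1)
        + sigma2 (-(c1 : ℚ)) (-(a3 : ℚ)) (-(a4 : ℚ)) (-(b4 : ℚ))
            / ((a3 : ℚ) * a4 * b4 * c1) = 0 := by
  rintro ⟨a1, a2, a3, a4, b2, b3, b4, c1, ha1, ha2, ha3, ha4, hb2, hb3, -, -,
    hsum₁, hsum₂, hsum₃, hprod₁, hprod₂, hloc⟩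
  obtain ⟨rfl, hP⟩ : a2 = b4 ∧ a3 * a4 = b2 * b3 :=
    eq_and_eq_of_mul_eq_mul_of_mul_eq_mul ha2.ne' (by positivity)
      (by linear_combination hprod₁) (by linear_combination hprod₂)
  obtain rfl : a1 = c1 := by omega
  have hS : b2 + b3 = 2 * a1 + a3 + a4 := by omega
  have hq1 : (0 : ℚ) < a1 := by exact_mod_cast ha1
  have hq2 : (0 : ℚ) < a2 := by exact_mod_cast ha2
  have hq3 : (0 : ℚ) < a3 := by exact_mod_cast ha3
  have hq4 : (0 : ℚ) < a4 := by exact_mod_cast ha4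
  rw [localization_sum_eq hq1.ne' hq2.ne' hq3.ne' hq4.ne' (by exact_mod_cast hP.symm)
    (by exact_mod_cast hS)] at hloc
  have : (0 : ℚ) < 4 * (a1 + a3 + a4) / (a2 * a3 * a4) := by positivity
  exact this.ne' hloc
end

section
/- For all positive integers a, b, c, consider the four quadruples of integers W1 = (a, b, c, −b−c), W2 = (a, −b, −c, b+c), W3 = (−a, b, c, −b−c), W4 = (−a, −b, −c, b+c). For each j, let σk(Wj) denote the k-th elementary symmetric polynomial of the four entries of Wj and Π(Wj) their product. Then, as rational numbers: Σ_j σ1(Wj)⁴/Π(Wj) = 0, Σ_j σ1(Wj)²·σ2(Wj)/Π(Wj) = 0, Σ_j σ2(Wj)²/Π(Wj) = 0, Σ_j σ1(Wj)·σ3(Wj)/Π(Wj) = 4, and Σ_j σ4(Wj)/Π(Wj) = 4. -/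
/-!
At each fixed point the three `S⁶` weights `v = (y, z, t)` sum to zero, so the elementary
symmetric polynomials of `(x, v)` are `e₁ = x`, `e₂ = σ₂(v)`, `e₃ = x σ₂(v) + σ₃(v)` and
`e₄ = x σ₃(v)`. Each of the five integrands is therefore a constant (`0` or `1`) plus an odd
function of the `S²` weight `x`, and the fixed points come in pairs `x = ±a` with the same `S⁶`
weights, so the odd parts cancel in pairs.
-/

/-- Elementary symmetric polynomials in four variables. -/
def e1 (w x y z : ℚ) : ℚ := w + x + y + z
def e2 (w x y z : ℚ) : ℚ := w * x + w * y + w * z + x * y + x * z + y * z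
def e3 (w x y z : ℚ) : ℚ := w * x * y + w * x * z + w * y * z + x * y * z
def e4 (w x y z : ℚ) : ℚ := w * x * y * z

section FixedPointWeights

variable {x y z t : ℚ}

theorem e1_eq_of_add_eq_zero (h : y + z + t = 0) : e1 x y z t = x := by
  unfold e1
  linear_combination h

theorem e2_eq_of_add_eq_zero (h : y + z + t = 0) : e2 x y z t = y * z + y * t + z * t := by
  unfold e2
  linear_combination x * h

theorem e3_eq : e3 x y z t = x * (y * z + y * t + z * t) + y * z * t := by
  unfold e3
  ring

theorem e4_eq : e4 x y z t = x * (y * z * t) := by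
  unfold e4
  ring

theorem e1_pow_four_div_e4_add_neg (h : y + z + t = 0) :
    e1 x y z t ^ 4 / e4 x y z t + e1 (-x) y z t ^ 4 / e4 (-x) y z t = 0 := by
  rw [e1_eq_of_add_eq_zero h, e1_eq_of_add_eq_zero h, e4_eq, e4_eq]
  ring

theorem e1_sq_mul_e2_div_e4_add_neg (h : y + z + t = 0) :
    e1 x y z t ^ 2 * e2 x y z t / e4 x y z t
      + e1 (-x) y z t ^ 2 * e2 (-x) y z t / e4 (-x) y z t = 0 := by
  rw [e1_eq_of_add_eq_zero h, e1_eq_of_add_eq_zero h, e2_eq_of_add_eq_zero h,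
    e2_eq_of_add_eq_zero h, e4_eq, e4_eq]
  ring

theorem e2_sq_div_e4_add_neg (h : y + z + t = 0) :
    e2 x y z t ^ 2 / e4 x y z t + e2 (-x) y z t ^ 2 / e4 (-x) y z t = 0 := by
  rw [e2_eq_of_add_eq_zero h, e2_eq_of_add_eq_zero h, e4_eq, e4_eq]
  ring

theorem e1_mul_e3_div_e4_add_neg (hx : x ≠ 0) (hp : y * z * t ≠ 0) (h : y + z + t = 0) :
    e1 x y z t * e3 x y z t / e4 x y z t + e1 (-x) y z t * e3 (-x) y z t / e4 (-x) y z t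
      = 2 := by
  rw [e1_eq_of_add_eq_zero h, e1_eq_of_add_eq_zero h, e3_eq, e3_eq, e4_eq, e4_eq]
  generalize y * z * t = p at hp ⊢
  field_simp
  ring

theorem e4_div_e4_add_neg (hx : x ≠ 0) (hp : y * z * t ≠ 0) :
    e4 x y z t / e4 x y z t + e4 (-x) y z t / e4 (-x) y z t = 2 := by
  have hx' : -x ≠ 0 := neg_ne_zero.mpr hx
  rw [e4_eq, e4_eq, div_self (mul_ne_zero hx hp), div_self (mul_ne_zero hx' hp)]
  norm_num

end FixedPointWeights

theorem stmt_9 (a b c : ℤ) (ha : 0 < a) (hb : 0 < b) (hc : 0 < c) :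
    ∃ W : Fin 4 → (ℚ × ℚ × ℚ × ℚ),
      W 0 = ((a : ℚ), (b : ℚ), (c : ℚ), -((b : ℚ) + c)) ∧
      W 1 = ((a : ℚ), -(b : ℚ), -(c : ℚ), (b : ℚ) + c) ∧
      W 2 = (-(a : ℚ), (b : ℚ), (c : ℚ), -((b : ℚ) + c)) ∧
      W 3 = (-(a : ℚ), -(b : ℚ), -(c : ℚ), (b : ℚ) + c) ∧
      (∑ j, (e1 (W j).1 (W j).2.1 (W j).2.2.1 (W j).2.2.2) ^ 4
          / e4 (W j).1 (W j).2.1 (W j).2.2.1 (W j).2.2.2 = 0) ∧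
      (∑ j, (e1 (W j).1 (W j).2.1 (W j).2.2.1 (W j).2.2.2) ^ 2
          * e2 (W j).1 (W j).2.1 (W j).2.2.1 (W j).2.2.2
          / e4 (W j).1 (W j).2.1 (W j).2.2.1 (W j).2.2.2 = 0) ∧
      (∑ j, (e2 (W j).1 (W j).2.1 (W j).2.2.1 (W j).2.2.2) ^ 2
          / e4 (W j).1 (W j).2.1 (W j).2.2.1 (W j).2.2.2 = 0) ∧
      (∑ j, (e1 (W j).1 (W j).2.1 (W j).2.2.1 (W j).2.2.2)
          * e3 (W j).1 (W j).2.1 (W j).2.2.1 (W j).2.2.2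
          / e4 (W j).1 (W j).2.1 (W j).2.2.1 (W j).2.2.2 = 4) ∧
      (∑ j, (e4 (W j).1 (W j).2.1 (W j).2.2.1 (W j).2.2.2)
          / e4 (W j).1 (W j).2.1 (W j).2.2.1 (W j).2.2.2 = 4) := by
  have hx : (a : ℚ) ≠ 0 := by positivity
  have hb' : (b : ℚ) ≠ 0 := by positivity
  have hc' : (c : ℚ) ≠ 0 := by positivity
  have hbc : (b : ℚ) + c ≠ 0 := by positivity
  have hp : (b : ℚ) * c * -(b + c) ≠ 0 :=
    mul_ne_zero (mul_ne_zero hb' hc') (neg_ne_zero.mpr hbc)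
  have hp' : -(b : ℚ) * -c * (b + c) ≠ 0 :=
    mul_ne_zero (mul_ne_zero (neg_ne_zero.mpr hb') (neg_ne_zero.mpr hc')) hbc
  have hs : (b : ℚ) + c + -(b + c) = 0 := by ring
  have hs' : -(b : ℚ) + -c + (b + c) = 0 := by ring
  refine ⟨![((a : ℚ), (b : ℚ), (c : ℚ), -((b : ℚ) + c)),
           ((a : ℚ), -(b : ℚ), -(c : ℚ), (b : ℚ) + c),
           (-(a : ℚ), (b : ℚ), (c : ℚ), -((b : ℚ) + c)),
           (-(a : ℚ), -(b : ℚ), -(c : ℚ), (b : ℚ) + c)],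
    rfl, rfl, rfl, rfl, ?_, ?_, ?_, ?_, ?_⟩ <;>
  simp only [Fin.sum_univ_four, Matrix.cons_val_zero, Matrix.cons_val_one, Matrix.cons_val_two,
    Matrix.cons_val_three, Matrix.head_cons, Matrix.tail_cons]
  · linear_combination e1_pow_four_div_e4_add_neg hs + e1_pow_four_div_e4_add_neg hs'
  · linear_combination e1_sq_mul_e2_div_e4_add_neg hs + e1_sq_mul_e2_div_e4_add_neg hs'
  · linear_combination e2_sq_div_e4_add_neg hs + e2_sq_div_e4_add_neg hs'
  · linear_combination e1_mul_e3_div_e4_add_neg hx hp hs + e1_mul_e3_div_e4_add_neg hx hp' hs'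
  · linear_combination e4_div_e4_add_neg hx hp + e4_div_e4_add_neg hx hp'
end
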